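/- Let V be an open subset of ℂ and (X, μ) a measure space. Suppose f : V × X → ℂ is such that (i) for almost every x ∈ X the map v ↦ f(v,x) is analytic on V, (ii) for every v ∈ V the map x ↦ f(v,x) is measurable, and (iii) there exists an integrable function g on X with |f(v,x)| ≤ g(x) for all v ∈ V and x ∈ X. Then the function F(v) = ∫_X f(v,x) dμ(x) is analytic on V. -/

import Mathlib

/-!
Complex differentiability of the integrand gives domination of its derivative for free: if
`closedBall v₀ r ⊆ V`, the Cauchy estimate on `closedBall v (r / 2)` yields
`‖∂ᵥ f(v, x)‖ ≤ 2 g(x) / r` for all `v` within `r / 2` of `v₀`. The derivative at `v₀` is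
measurable in `x` as an a.e. limit of difference quotients, so the dominated differentiation
theorem applies.
-/

open MeasureTheory Filter Topology Metric

theorem aestronglyMeasurable_deriv_of_eventually {𝕜 E X : Type*} [NontriviallyNormedField 𝕜]
    [NormedAddCommGroup E] [NormedSpace 𝕜 E] [MeasurableSpace X] {μ : Measure X}
    {f : 𝕜 → X → E} {v₀ : 𝕜}
    (h_meas : ∀ᶠ v in 𝓝 v₀, AEStronglyMeasurable (f v) μ)
    (h_diff : ∀ᵐ x ∂μ, DifferentiableAt 𝕜 (f · x) v₀) :
    AEStronglyMeasurable (fun x => deriv (f · x) v₀) μ := by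
  obtain ⟨c, hc⟩ := (𝓝[≠] v₀).exists_seq_tendsto
  obtain ⟨N, hN⟩ := eventually_atTop.1 ((tendsto_nhdsWithin_iff.1 hc).1.eventually h_meas)
  have hc' : Tendsto (fun n => c (n + N)) atTop (𝓝[≠] v₀) := hc.comp (tendsto_add_atTop_nat N)
  refine aestronglyMeasurable_of_tendsto_ae atTop
    (f := fun n x => slope (f · x) v₀ (c (n + N))) (fun n => ?_) ?_
  · simp only [slope_def_module]
    exact ((hN _ (Nat.le_add_left N n)).sub h_meas.self_of_nhds).const_smul _
  · filter_upwards [h_diff] with x hx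
    exact hx.hasDerivAt.tendsto_slope.comp hc'

theorem norm_deriv_le_of_differentiableOn_closedBall {E : Type*} [NormedAddCommGroup E]
    [NormedSpace ℂ E] {f : ℂ → E} {c : ℂ} {r C : ℝ} (hr : 0 < r)
    (hf : DifferentiableOn ℂ f (closedBall c r)) (hC : ∀ z ∈ closedBall c r, ‖f z‖ ≤ C) :
    ‖deriv f c‖ ≤ C / r :=
  Complex.norm_deriv_le_of_forall_mem_sphere_norm_le hr
    (hf.diffContOnCl_ball subset_rfl) fun z hz => hC z (sphere_subset_closedBall hz)

theorem hasDerivAt_integral_of_differentiableOn_closedBall {X E : Type*} [MeasurableSpace X]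
    {μ : Measure X} [NormedAddCommGroup E] [NormedSpace ℂ E] [CompleteSpace E]
    {f : ℂ → X → E} {g : X → ℝ} {v₀ : ℂ} {r : ℝ} (hr : 0 < r)
    (h_diff : ∀ᵐ x ∂μ, DifferentiableOn ℂ (f · x) (closedBall v₀ r))
    (h_meas : ∀ v ∈ closedBall v₀ r, AEStronglyMeasurable (f v) μ)
    (h_int : Integrable g μ)
    (h_bound : ∀ᵐ x ∂μ, ∀ v ∈ closedBall v₀ r, ‖f v x‖ ≤ g x) :
    HasDerivAt (fun v => ∫ x, f v x ∂μ) (∫ x, deriv (f · x) v₀ ∂μ) v₀ := by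
  have h_nhds : closedBall v₀ r ∈ 𝓝 v₀ := closedBall_mem_nhds v₀ hr
  have h_sub : ∀ v ∈ ball v₀ (r / 2), closedBall v (r / 2) ⊆ closedBall v₀ r := fun v hv =>
    closedBall_subset_closedBall' (by linarith [mem_ball.1 hv])
  have h_hasDeriv : ∀ᵐ x ∂μ, ∀ v ∈ ball v₀ (r / 2), HasDerivAt (f · x) (deriv (f · x) v) v := by
    filter_upwards [h_diff] with x hx v hv
    exact (hx.differentiableAt (mem_of_superset (closedBall_mem_nhds v (half_pos hr))
      (h_sub v hv))).hasDerivAt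
  have h_deriv_le : ∀ᵐ x ∂μ, ∀ v ∈ ball v₀ (r / 2), ‖deriv (f · x) v‖ ≤ g x / (r / 2) := by
    filter_upwards [h_diff, h_bound] with x hx hxg v hv
    exact norm_deriv_le_of_differentiableOn_closedBall (half_pos hr) (hx.mono (h_sub v hv))
      fun z hz => hxg z (h_sub v hv hz)
  have h_int₀ : Integrable (f v₀) μ :=
    h_int.mono' (h_meas v₀ (mem_closedBall_self hr.le))
      (h_bound.mono fun x hx => hx v₀ (mem_closedBall_self hr.le))
  exact (hasDerivAt_integral_of_dominated_loc_of_deriv_le (ball_mem_nhds v₀ (half_pos hr))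
    (eventually_of_mem h_nhds h_meas) h_int₀
    (aestronglyMeasurable_deriv_of_eventually (eventually_of_mem h_nhds h_meas)
      (h_diff.mono fun x hx => hx.differentiableAt h_nhds))
    h_deriv_le (h_int.div_const _) h_hasDeriv).2

theorem analyticity_criterion {X : Type*} [MeasurableSpace X] (μ : Measure X)
    (V : Set ℂ) (hV : IsOpen V) (f : ℂ → X → ℂ) (g : X → ℝ)
    (h_anal : ∀ᵐ x ∂μ, DifferentiableOn ℂ (fun v => f v x) V)
    (h_meas : ∀ v ∈ V, AEStronglyMeasurable (fun x => f v x) μ)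
    (h_int : Integrable g μ)
    (h_bound : ∀ v ∈ V, ∀ x, ‖f v x‖ ≤ g x) :
    DifferentiableOn ℂ (fun v => ∫ x, f v x ∂μ) V := by
  intro v₀ hv₀
  obtain ⟨r, hr, hrV⟩ := nhds_basis_closedBall.mem_iff.1 (hV.mem_nhds hv₀)
  have h_deriv := hasDerivAt_integral_of_differentiableOn_closedBall hr
    (h_anal.mono fun x hx => hx.mono hrV) (fun v hv => h_meas v (hrV hv)) h_int
    (ae_of_all μ fun x v hv => h_bound v (hrV hv) x)
  exact h_deriv.differentiableAt.differentiableWithinAt
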